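/- arXiv:1511.01398 — 2 statements merged into one kernel-verified Lean document; each statement's English description precedes it below -/
import Mathlib

section
/- For every ε with 0 < ε < 1, there is some g such that every cubic graph G of girth at least g satisfies γ_e(G) ≤ ε·n(G). In particular, g = 2⌈(3/ε)ln(3/ε)⌉ + 1 suffices. -/
open Finset

/-- `sdist G S u v` : minimum number of edges of a walk in `G` from `u` to `v`
whose only vertex in `S` is the endvertex `v` (`⊤` if none exists). -/
noncomputable def sdist {V : Type*} (G : SimpleGraph V) (S : Set V) (u v : V) : ℕ∞ :=
  ⨅ p : {p : G.Walk u v // ∀ x ∈ p.support, x ∈ S → x = v}, ((p : G.Walk u v).length : ℕ∞)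

/-- `expWeight G S u = ∑_{v ∈ S} (1/2)^(sdist G S u v - 1)`, with `(1/2)^∞ = 0`.
Note `(1/2)^(d-1) = 2 * (1/2)^d`. -/
noncomputable def expWeight {V : Type*} (G : SimpleGraph V) (S : Finset V) (u : V) : ℝ :=
  ∑ v ∈ S, if sdist G (↑S) u v = ⊤ then 0 else 2 * (1 / 2 : ℝ) ^ (sdist G (↑S) u v).toNat

/-- `S` is an exponential dominating set of `G`. -/
def IsExpDomSet {V : Type*} (G : SimpleGraph V) (S : Finset V) : Prop :=
  ∀ u, u ∉ S → 1 ≤ expWeight G S u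

/-- The exponential domination number of `G`. -/
noncomputable def expDomNum (V : Type*) [Fintype V] (G : SimpleGraph V) : ℕ :=
  sInf {k | ∃ S : Finset V, IsExpDomSet G S ∧ S.card = k}


set_option linter.unusedSectionVars false
set_option linter.unusedVariables false
set_option maxHeartbeats 1000000

open SimpleGraph

variable {V : Type} [Fintype V] [DecidableEq V] {G : SimpleGraph V}

/-- From the girth hypothesis, every cycle is long. -/
lemma cycle_long {g : ℕ} (hg : (g : ℕ∞) ≤ G.girth) {a : V} (w : G.Walk a a)
    (hw : w.IsCycle) : g ≤ w.length := by
  have h1 : (G.girth : ℕ∞) ≤ G.egirth := by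
    rw [SimpleGraph.girth]
    exact ENat.coe_toNat_le_self _
  have := SimpleGraph.le_egirth.mp (le_trans hg h1) a w hw
  exact_mod_cast this

/-- Two edges from `v` to a path avoiding `v` make a cycle. -/
lemma cycle_of_two_edges {v w1 w2 : V} (h1 : G.Adj v w1) (h2 : G.Adj v w2)
    (hne : w1 ≠ w2) (Q : G.Walk w1 w2) (hQ : Q.IsPath) (hv : v ∉ Q.support) :
    ∃ (a : V) (c : G.Walk a a), c.IsCycle ∧ c.length = Q.length + 2 := by
  have P : G.Walk w1 v := Q.concat h2.symm
  refine ⟨v, SimpleGraph.Walk.cons h1 (Q.concat h2.symm), ?_, ?_⟩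
  · rw [SimpleGraph.Walk.cons_isCycle_iff]
    constructor
    · rw [SimpleGraph.Walk.isPath_def, SimpleGraph.Walk.support_concat]
      simp only [List.concat_eq_append, List.nodup_append, List.nodup_cons, List.not_mem_nil,
        not_false_iff, List.nodup_nil, and_true, List.mem_singleton]
      refine ⟨hQ.support_nodup, trivial, ?_⟩
      rintro a ha b rfl rfl
      exact hv ha
    · rw [SimpleGraph.Walk.edges_concat]
      simp only [List.concat_eq_append, List.mem_append, List.mem_singleton]
      rintro (h | h)
      · exact hv (Q.fst_mem_support_of_mem_edges h)
      · rw [Sym2.eq_iff] at h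
        rcases h with ⟨hvw2, _⟩ | ⟨_, h12⟩
        · exact h2.ne hvw2
        · exact hne h12
  · simp [SimpleGraph.Walk.length_concat]

/-- An edge plus a path between its endpoints (not using the edge) makes a cycle. -/
lemma cycle_of_edge_path {v w : V} (h : G.Adj w v) (Q : G.Walk v w) (hQ : Q.IsPath)
    (he : s(w, v) ∉ Q.edges) :
    ∃ (a : V) (c : G.Walk a a), c.IsCycle ∧ c.length = Q.length + 1 := by
  refine ⟨w, SimpleGraph.Walk.cons h Q, ?_, by simp⟩
  rw [SimpleGraph.Walk.cons_isCycle_iff]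
  exact ⟨hQ, he⟩

variable {V : Type} [Fintype V] [DecidableEq V] {G : SimpleGraph V}

lemma reach_dist_triangle {u v w : V} (h1 : G.Reachable u v) (h2 : G.Reachable v w) :
    G.dist u w ≤ G.dist u v + G.dist v w := by
  obtain ⟨p, hp⟩ := h1.exists_walk_length_eq_dist
  obtain ⟨q, hq⟩ := h2.exists_walk_length_eq_dist
  rw [← hp, ← hq, ← SimpleGraph.Walk.length_append]
  exact SimpleGraph.dist_le _

lemma mem_support_dist_le {u v x : V} (P : G.Walk u v) (hx : x ∈ P.support) :
    G.dist u x ≤ P.length :=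
  le_trans (SimpleGraph.dist_le (P.takeUntil x hx)) (P.length_takeUntil_le hx)

lemma mem_support_dist_add {u v x : V} (P : G.Walk u v) (hlen : P.length = G.dist u v)
    (hx : x ∈ P.support) : G.dist u x + G.dist x v = G.dist u v := by
  have hsplit := P.take_spec hx
  have hlen2 : (P.takeUntil x hx).length + (P.dropUntil x hx).length = P.length := by
    rw [← SimpleGraph.Walk.length_append, hsplit]
  have h1 : G.dist u x ≤ (P.takeUntil x hx).length := SimpleGraph.dist_le _
  have h2 : G.dist x v ≤ (P.dropUntil x hx).length := SimpleGraph.dist_le _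
  have h3 : G.dist u v ≤ G.dist u x + G.dist x v :=
    reach_dist_triangle ⟨P.takeUntil x hx⟩ ⟨P.dropUntil x hx⟩
  omega

lemma reach_of_mem_support {u v x : V} (P : G.Walk u v) (hx : x ∈ P.support) :
    G.Reachable u x := ⟨P.takeUntil x hx⟩

/-- unique predecessor: if `dist u v = k` with `1 ≤ k ≤ d` and all cycles have length
`≥ 2d+1`, then `v` has a unique neighbor at distance `k-1`. -/
lemma pred_unique {d : ℕ}
    (hcyc : ∀ (a : V) (c : G.Walk a a), c.IsCycle → 2 * d + 1 ≤ c.length)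
    {u v w1 w2 : V} {k : ℕ} (hk1 : 1 ≤ k) (hkd : k ≤ d)
    (hr : G.Reachable u v) (hv : G.dist u v = k)
    (h1 : G.Adj v w1) (h2 : G.Adj v w2)
    (hd1 : G.dist u w1 = k - 1) (hd2 : G.dist u w2 = k - 1) : w1 = w2 := by
  have hrw1 : G.Reachable u w1 := hr.trans ⟨h1.toWalk⟩
  have hrw2 : G.Reachable u w2 := hr.trans ⟨h2.toWalk⟩
  rcases Nat.eq_or_lt_of_le hk1 with hk | hk
  · -- k = 1 : both are u
    have e1 : w1 = u := by
      have : G.dist u w1 = 0 := by omega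
      exact ((hrw1.dist_eq_zero_iff).mp this).symm
    have e2 : w2 = u := by
      have : G.dist u w2 = 0 := by omega
      exact ((hrw2.dist_eq_zero_iff).mp this).symm
    rw [e1, e2]
  · by_contra hne
    obtain ⟨P1, hP1p, hP1⟩ := hrw1.exists_path_of_dist
    obtain ⟨P2, hP2p, hP2⟩ := hrw2.exists_path_of_dist
    set W : G.Walk w1 w2 := P1.reverse.append P2 with hW
    have hWlen : W.length = (k - 1) + (k - 1) := by
      rw [hW, SimpleGraph.Walk.length_append, SimpleGraph.Walk.length_reverse, hP1, hP2, hd1, hd2]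
    have hvW : v ∉ W.support := by
      intro hmem
      rw [hW, SimpleGraph.Walk.mem_support_append_iff] at hmem
      have : G.dist u v ≤ k - 1 := by
        rcases hmem with hmem | hmem
        · rw [SimpleGraph.Walk.support_reverse, List.mem_reverse] at hmem
          calc G.dist u v ≤ P1.length := mem_support_dist_le P1 hmem
          _ = k - 1 := by rw [hP1, hd1]
        · calc G.dist u v ≤ P2.length := mem_support_dist_le P2 hmem
          _ = k - 1 := by rw [hP2, hd2]
      omega
    have hvQ : v ∉ W.bypass.support := fun h => hvW (W.support_bypass_subset h)
    obtain ⟨a, c, hc, hclen⟩ := cycle_of_two_edges h1 h2 hne W.bypass W.bypass_isPath hvQ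
    have := hcyc a c hc
    have := W.length_bypass_le
    omega

/-- no horizontal edges below level `d`. -/
lemma no_horizontal {d : ℕ}
    (hcyc : ∀ (a : V) (c : G.Walk a a), c.IsCycle → 2 * d + 1 ≤ c.length)
    {u v w : V} {k : ℕ} (hk1 : 1 ≤ k) (hkd : k + 1 ≤ d)
    (hrv : G.Reachable u v) (hv : G.dist u v = k) (hw : G.dist u w = k)
    (hadj : G.Adj v w) : False := by
  have hrw : G.Reachable u w := hrv.trans ⟨hadj.toWalk⟩
  obtain ⟨P1, hP1p, hP1⟩ := hrv.exists_path_of_dist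
  obtain ⟨P2, hP2p, hP2⟩ := hrw.exists_path_of_dist
  set W : G.Walk v w := P1.reverse.append P2 with hWdef
  have hWlen : W.length = k + k := by
    rw [hWdef, SimpleGraph.Walk.length_append, SimpleGraph.Walk.length_reverse, hP1, hP2, hv, hw]
  have hedge : s(w, v) ∉ W.bypass.edges := by
    intro hmem
    have hmem' := W.edges_bypass_subset hmem
    rw [hWdef, SimpleGraph.Walk.edges_append, List.mem_append, SimpleGraph.Walk.edges_reverse,
      List.mem_reverse] at hmem'
    rcases hmem' with hmem' | hmem'
    · -- w ∈ P1.support, P1 : u → v shortest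
      have hsup : w ∈ P1.support := P1.fst_mem_support_of_mem_edges hmem'
      have := mem_support_dist_add P1 (by rw [hP1]) hsup
      have hwv : G.dist w v = 0 := by omega
      have : w = v := (SimpleGraph.Reachable.dist_eq_zero_iff ⟨hadj.symm.toWalk⟩).mp hwv
      exact hadj.ne this.symm
    · -- v ∈ P2.support
      have hsup : v ∈ P2.support := P2.snd_mem_support_of_mem_edges hmem'
      have := mem_support_dist_add P2 (by rw [hP2]) hsup
      have hvw : G.dist v w = 0 := by omega
      have : v = w := (SimpleGraph.Reachable.dist_eq_zero_iff ⟨hadj.toWalk⟩).mp hvw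
      exact hadj.ne this
  obtain ⟨a, c, hc, hclen⟩ := cycle_of_edge_path hadj.symm W.bypass W.bypass_isPath hedge
  have := hcyc a c hc
  have := W.length_bypass_le
  omega


variable {V : Type} [Fintype V] [DecidableEq V] {G : SimpleGraph V}

lemma dist_getVert_le {u v : V} (P : G.Walk u v) (i : ℕ) :
    G.dist u (P.getVert i) ≤ i ∧ G.Reachable u (P.getVert i) := by
  induction P generalizing i with
  | nil =>
    refine ⟨?_, SimpleGraph.Reachable.refl _⟩
    simp [SimpleGraph.Walk.getVert, SimpleGraph.dist_self]
  | @cons a b c h q ih =>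
    cases i with
    | zero =>
      refine ⟨?_, SimpleGraph.Reachable.refl _⟩
      simp [SimpleGraph.Walk.getVert, SimpleGraph.dist_self]
    | succ i =>
      have hgv : (SimpleGraph.Walk.cons h q).getVert (i+1) = q.getVert i := rfl
      rw [hgv]
      obtain ⟨ihd, ihr⟩ := ih i
      have hr : G.Reachable a (q.getVert i) := (h.reachable).trans ihr
      refine ⟨?_, hr⟩
      have := reach_dist_triangle (G := G) h.reachable ihr
      have hab : G.dist a b ≤ 1 := by
        rw [SimpleGraph.dist_eq_one_iff_adj.mpr h]
      omega

lemma exists_pred {u v : V} {k : ℕ} (hr : G.Reachable u v) (hv : G.dist u v = k)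
    (hk : 1 ≤ k) : ∃ w, G.Adj v w ∧ G.dist u w = k - 1 := by
  obtain ⟨P, hPp, hPl⟩ := hr.exists_path_of_dist
  have hlt : k - 1 < P.length := by omega
  have hadj := P.adj_getVert_succ hlt
  have hlast : P.getVert (k-1+1) = v := by
    have : k - 1 + 1 = P.length := by omega
    rw [this, SimpleGraph.Walk.getVert_length]
  rw [hlast] at hadj
  refine ⟨P.getVert (k-1), hadj.symm, ?_⟩
  have h1 := (dist_getVert_le P (k-1)).1
  have h2 := (dist_getVert_le P (k-1)).2
  -- lower bound: dist u v ≤ dist u w + 1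
  have h3 : G.dist u v ≤ G.dist u (P.getVert (k-1)) + 1 := by
    have := reach_dist_triangle (G := G) h2 hadj.reachable
    have : G.dist (P.getVert (k-1)) v ≤ 1 := by
      rw [SimpleGraph.dist_eq_one_iff_adj.mpr hadj]
    omega
  omega

/-- the set of neighbors of `v` one level further from `u`. -/
noncomputable def nbrUp (G : SimpleGraph V) [DecidableRel G.Adj] (u v : V) : Finset V :=
  (G.neighborFinset v).filter (fun w => G.dist u w = G.dist u v + 1)

variable [DecidableRel G.Adj]

lemma nbrUp_card_root (hdeg : ∀ x, G.degree x = 3) (u : V) : (nbrUp G u u).card = 3 := by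
  classical
  have : nbrUp G u u = G.neighborFinset u := by
    apply Finset.filter_true_of_mem
    intro w hw
    rw [SimpleGraph.mem_neighborFinset] at hw
    rw [SimpleGraph.dist_self, SimpleGraph.dist_eq_one_iff_adj]
    exact hw
  rw [this, SimpleGraph.card_neighborFinset_eq_degree, hdeg]

lemma nbrUp_card (hdeg : ∀ x, G.degree x = 3) {d : ℕ}
    (hcyc : ∀ (a : V) (c : G.Walk a a), c.IsCycle → 2 * d + 1 ≤ c.length)
    {u v : V} {k : ℕ} (hk1 : 1 ≤ k) (hkd : k + 1 ≤ d)
    (hr : G.Reachable u v) (hv : G.dist u v = k) : (nbrUp G u v).card = 2 := by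
  classical
  obtain ⟨w0, hw0adj, hw0d⟩ := exists_pred hr hv hk1
  have hmem : w0 ∈ G.neighborFinset v := (SimpleGraph.mem_neighborFinset _ _ _).mpr hw0adj
  have key : nbrUp G u v = (G.neighborFinset v).erase w0 := by
    ext w
    simp only [nbrUp, Finset.mem_filter, Finset.mem_erase, SimpleGraph.mem_neighborFinset]
    constructor
    · rintro ⟨hadj, hdist⟩
      refine ⟨?_, hadj⟩
      intro heq
      rw [heq, hw0d] at hdist
      omega
    · rintro ⟨hne, hadj⟩
      refine ⟨hadj, ?_⟩
      -- dist u w ∈ {k-1, k, k+1}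
      have hrw : G.Reachable u w := hr.trans hadj.reachable
      have hub : G.dist u w ≤ k + 1 := by
        have := reach_dist_triangle (G := G) hr hadj.reachable
        have h1 : G.dist v w ≤ 1 := by rw [SimpleGraph.dist_eq_one_iff_adj.mpr hadj]
        omega
      have hlb : k ≤ G.dist u w + 1 := by
        have := reach_dist_triangle (G := G) hrw hadj.symm.reachable
        have h1 : G.dist w v ≤ 1 := by rw [SimpleGraph.dist_eq_one_iff_adj.mpr hadj.symm]
        omega
      rw [hv]
      rcases Nat.lt_trichotomy (G.dist u w) k with h | h | h
      · exfalso
        apply hne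
        exact pred_unique hcyc hk1 (by omega) hr hv hadj hw0adj (by omega) hw0d
      · exact absurd (no_horizontal hcyc hk1 hkd hr hv h hadj) not_false
      · omega
  rw [key, Finset.card_erase_of_mem hmem, SimpleGraph.card_neighborFinset_eq_degree, hdeg]


variable {V : Type} [Fintype V] [DecidableEq V] {G : SimpleGraph V} [DecidableRel G.Adj]

/-- geodesic lists of length `k` from `u`, listed from the far end back to `u`. -/
noncomputable def geo (G : SimpleGraph V) [DecidableRel G.Adj] (u : V) : ℕ → Finset (List V)
  | 0 => {[u]}
  | (k+1) => (geo G u k).biUnion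
      (fun l => match l with
        | [] => ∅
        | (a :: _) => (nbrUp G u a).image (fun w => w :: l))

lemma geo_succ (G : SimpleGraph V) [DecidableRel G.Adj] (u : V) (k : ℕ) :
    geo G u (k+1) = (geo G u k).biUnion
      (fun l => match l with
        | [] => ∅
        | (a :: _) => (nbrUp G u a).image (fun w => w :: l)) := rfl

lemma mem_geo_succ {u : V} {k : ℕ} {l : List V} :
    l ∈ geo G u (k+1) ↔ ∃ t ∈ geo G u k, ∃ a t', t = a :: t' ∧
      ∃ w ∈ nbrUp G u a, l = w :: t := by
  rw [geo_succ, Finset.mem_biUnion]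
  constructor
  · rintro ⟨t, ht, hl⟩
    match t with
    | [] => simp at hl
    | (a :: t') =>
      simp only [Finset.mem_image] at hl
      obtain ⟨w, hw, rfl⟩ := hl
      exact ⟨a :: t', ht, a, t', rfl, w, hw, rfl⟩
  · rintro ⟨t, ht, a, t', rfl, w, hw, rfl⟩
    refine ⟨a :: t', ht, ?_⟩
    simp only [Finset.mem_image]
    exact ⟨w, hw, rfl⟩

lemma geo_prop {u : V} {k : ℕ} {l : List V} (hl : l ∈ geo G u k) :
    l.length = k + 1 ∧ l.getLast? = some u ∧
    (∀ i, i ≤ k → G.dist u (l.getD i u) = k - i) ∧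
    (∀ x ∈ l, G.Reachable u x) ∧ l.Chain' G.Adj := by
  induction k generalizing l with
  | zero =>
    rw [geo] at hl
    simp only [Finset.mem_singleton] at hl
    subst hl
    refine ⟨rfl, rfl, ?_, ?_, List.isChain_singleton u⟩
    · intro i hi
      interval_cases i
      simp [SimpleGraph.dist_self]
    · intro x hx
      simp only [List.mem_singleton] at hx
      subst hx
      exact SimpleGraph.Reachable.refl _
  | succ k ih =>
    rw [mem_geo_succ] at hl
    obtain ⟨t, ht, a, t', rfl, w, hw, rfl⟩ := hl
    obtain ⟨ihlen, ihlast, ihdist, ihreach, ihchain⟩ := ih ht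
    have hda : G.dist u a = k := by
      have := ihdist 0 (Nat.zero_le _)
      simpa using this
    simp only [nbrUp, Finset.mem_filter, SimpleGraph.mem_neighborFinset] at hw
    obtain ⟨hadj, hdw⟩ := hw
    rw [hda] at hdw
    have hreachw : G.Reachable u w := (ihreach a (by simp)).trans hadj.reachable
    refine ⟨by simpa using ihlen, ?_, ?_, ?_, ?_⟩
    · rw [List.getLast?_cons_cons]
      exact ihlast
    · intro i hi
      cases i with
      | zero => simpa using hdw
      | succ i =>
        have : (w :: a :: t').getD (i+1) u = (a :: t').getD i u := rfl
        rw [this]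
        have := ihdist i (by omega)
        rw [this]
        omega
    · intro x hx
      rcases List.mem_cons.mp hx with rfl | hx
      · exact hreachw
      · exact ihreach x hx
    · show List.IsChain G.Adj (w :: a :: t')
      rw [List.isChain_cons_cons]
      exact ⟨hadj.symm, ihchain⟩

lemma geo_ne_nil {u : V} {k : ℕ} {l : List V} (hl : l ∈ geo G u k) : l ≠ [] := by
  have := (geo_prop hl).1
  intro h
  rw [h] at this
  simp at this

/-- head of a geo list is at distance `k`. -/
lemma geo_head_dist {u : V} {k : ℕ} {l : List V} (hl : l ∈ geo G u k) :
    G.dist u (l.getD 0 u) = k := by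
  have := (geo_prop hl).2.2.1 0 (Nat.zero_le _)
  simpa using this

lemma geo_card (hdeg : ∀ x, G.degree x = 3) {d : ℕ}
    (hcyc : ∀ (a : V) (c : G.Walk a a), c.IsCycle → 2 * d + 1 ≤ c.length)
    (u : V) {k : ℕ} (hk1 : 1 ≤ k) (hkd : k ≤ d) :
    (geo G u k).card = 3 * 2 ^ (k - 1) := by
  induction k with
  | zero => omega
  | succ k ih =>
    have hdisj : ∀ t1 ∈ geo G u k, ∀ t2 ∈ geo G u k, t1 ≠ t2 →
        Disjoint ((fun l => match l with
          | [] => (∅ : Finset (List V))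
          | (a :: _) => (nbrUp G u a).image (fun w => w :: l)) t1)
          ((fun l => match l with
          | [] => (∅ : Finset (List V))
          | (a :: _) => (nbrUp G u a).image (fun w => w :: l)) t2) := by
      intro t1 ht1 t2 ht2 hne
      match t1, t2 with
      | [], _ => simp
      | (a :: t'), [] => simp
      | (a1 :: t1'), (a2 :: t2') =>
        simp only [Finset.disjoint_left, Finset.mem_image]
        rintro x ⟨w1, _, rfl⟩ ⟨w2, _, hx⟩
        apply hne
        exact (List.cons.injEq _ _ _ _ ▸ hx).2.symm ▸ rfl
    rw [geo_succ, Finset.card_biUnion hdisj]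
    rcases Nat.eq_or_lt_of_le hk1 with hk | hk
    · -- k + 1 = 1, i.e. k = 0
      have hk0 : k = 0 := by omega
      subst hk0
      rw [geo]
      rw [Finset.sum_singleton]
      have : ((nbrUp G u u).image (fun w => w :: [u])).card = (nbrUp G u u).card :=
        Finset.card_image_of_injective _ (fun a b h => (List.cons.injEq _ _ _ _ ▸ h).1)
      simp only [this, nbrUp_card_root hdeg]
      norm_num
    · -- k ≥ 1
      have hksum : ∀ t ∈ geo G u k, ((fun l => match l with
          | [] => (∅ : Finset (List V))
          | (a :: _) => (nbrUp G u a).image (fun w => w :: l)) t).card = 2 := by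
        intro t ht
        obtain ⟨a, t', rfl⟩ : ∃ a t', t = a :: t' := by
          match t, geo_ne_nil ht with
          | (a :: t'), _ => exact ⟨a, t', rfl⟩
        have hda : G.dist u a = k := by simpa using geo_head_dist ht
        have hra : G.Reachable u a := (geo_prop ht).2.2.2.1 a (by simp)
        have hcard : (nbrUp G u a).card = 2 := nbrUp_card hdeg hcyc (by omega) (by omega) hra hda
        rw [Finset.card_image_of_injective _ (fun x y h => (List.cons.injEq _ _ _ _ ▸ h).1)]
        exact hcard
      have h2 : (∑ _t ∈ geo G u k, 2) = 3 * 2 ^ (k + 1 - 1) := by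
        rw [Finset.sum_const, ih (by omega) (by omega)]
        have : k + 1 - 1 = (k - 1) + 1 := by omega
        rw [this, pow_succ]
        ring
      exact (Finset.sum_congr rfl hksum).trans h2


variable {V : Type} [Fintype V] [DecidableEq V] {G : SimpleGraph V} [DecidableRel G.Adj]

/-- geodesics to a given endpoint are unique. -/
lemma geo_unique {d : ℕ}
    (hcyc : ∀ (a : V) (c : G.Walk a a), c.IsCycle → 2 * d + 1 ≤ c.length)
    {u : V} {m : ℕ} (hmd : m ≤ d) {l1 l2 : List V}
    (h1 : l1 ∈ geo G u m) (h2 : l2 ∈ geo G u m)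
    (hhead : l1.getD 0 u = l2.getD 0 u) : l1 = l2 := by
  induction m generalizing l1 l2 with
  | zero =>
    rw [geo, Finset.mem_singleton] at h1 h2
    rw [h1, h2]
  | succ k ih =>
    rw [mem_geo_succ] at h1 h2
    obtain ⟨t1, ht1, a1, t1', rfl, w1, hw1, rfl⟩ := h1
    obtain ⟨t2, ht2, a2, t2', rfl, w2, hw2, rfl⟩ := h2
    simp only [List.getD_cons_zero] at hhead
    subst hhead
    -- a1 and a2 are both neighbors of w1 at distance k
    simp only [nbrUp, Finset.mem_filter, SimpleGraph.mem_neighborFinset] at hw1 hw2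
    obtain ⟨hadj1, hd1⟩ := hw1
    obtain ⟨hadj2, hd2⟩ := hw2
    have hda1 : G.dist u a1 = k := by simpa using geo_head_dist ht1
    have hda2 : G.dist u a2 = k := by simpa using geo_head_dist ht2
    rw [hda1] at hd1
    rw [hda2] at hd2
    have hrw : G.Reachable u w1 :=
      ((geo_prop ht1).2.2.2.1 a1 (by simp)).trans hadj1.reachable
    have haa : a1 = a2 := by
      have := pred_unique hcyc (k := k+1) (by omega) (by omega) hrw (by omega)
        hadj1.symm hadj2.symm (by simpa using hda1) (by simpa using hda2)
      exact this
    subst haa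
    have : (a1 :: t1') = (a1 :: t2') := by
      apply ih (by omega) ht1 ht2
      simp
    rw [this]

lemma geo_suffix {u : V} {k m : ℕ} (hm : m ≤ k) {l : List V} (hl : l ∈ geo G u k) :
    l.drop (k - m) ∈ geo G u m := by
  induction k generalizing l with
  | zero =>
    have : m = 0 := by omega
    subst this
    simpa using hl
  | succ k ih =>
    rcases Nat.eq_or_lt_of_le hm with he | hlt
    · subst he
      simpa using hl
    · rw [mem_geo_succ] at hl
      obtain ⟨t, ht, a, t', rfl, w, hw, rfl⟩ := hl
      have hstep : (w :: a :: t').drop (k + 1 - m) = (a :: t').drop (k - m) := by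
        have : k + 1 - m = (k - m) + 1 := by omega
        rw [this]
        rfl
      rw [hstep]
      exact ih (by omega) ht

/-- at most `2^(j-m)` geodesics of length `j` have a given suffix of length `m`. -/
lemma geo_fiber (hdeg : ∀ x, G.degree x = 3) {d : ℕ}
    (hcyc : ∀ (a : V) (c : G.Walk a a), c.IsCycle → 2 * d + 1 ≤ c.length)
    {u : V} {m : ℕ} (hm1 : 1 ≤ m) (s : List V) :
    ∀ j, m ≤ j → j ≤ d →
      ((geo G u j).filter (fun l => l.drop (j - m) = s)).card ≤ 2 ^ (j - m) := by
  intro j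
  induction j with
  | zero => intro h1 h2; omega
  | succ j ih =>
    intro hmj hjd
    rcases Nat.eq_or_lt_of_le hmj with he | hlt
    · -- j + 1 = m
      rw [← he]
      simp only [Nat.sub_self, pow_zero]
      rw [Finset.card_le_one]
      intro l1 hl1 l2 hl2
      simp only [Finset.mem_filter, List.drop_zero] at hl1 hl2
      rw [hl1.2, hl2.2]
    · -- m ≤ j
      have hmj' : m ≤ j := by omega
      have hsub : ((geo G u (j+1)).filter (fun l => l.drop (j + 1 - m) = s)) ⊆
          (((geo G u j).filter (fun l => l.drop (j - m) = s)).biUnion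
            (fun t => match t with
              | [] => ∅
              | (a :: _) => (nbrUp G u a).image (fun w => w :: t))) := by
        intro l hl
        simp only [Finset.mem_filter] at hl
        obtain ⟨hlg, hldrop⟩ := hl
        rw [mem_geo_succ] at hlg
        obtain ⟨t, ht, a, t', rfl, w, hw, rfl⟩ := hlg
        rw [Finset.mem_biUnion]
        refine ⟨a :: t', ?_, ?_⟩
        · rw [Finset.mem_filter]
          refine ⟨ht, ?_⟩
          have : j + 1 - m = (j - m) + 1 := by omega
          rw [this] at hldrop
          exact hldrop
        · simp only [Finset.mem_image]
          exact ⟨w, hw, rfl⟩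
      calc ((geo G u (j+1)).filter (fun l => l.drop (j + 1 - m) = s)).card
          ≤ _ := Finset.card_le_card hsub
        _ ≤ ∑ t ∈ ((geo G u j).filter (fun l => l.drop (j - m) = s)),
            ((fun t => match t with
              | [] => (∅ : Finset (List V))
              | (a :: _) => (nbrUp G u a).image (fun w => w :: t)) t).card :=
            Finset.card_biUnion_le
        _ ≤ ∑ t ∈ ((geo G u j).filter (fun l => l.drop (j - m) = s)), 2 := by
            apply Finset.sum_le_sum
            intro t ht
            rw [Finset.mem_filter] at ht
            obtain ⟨a, t', rfl⟩ : ∃ a t', t = a :: t' := by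
              match t, geo_ne_nil ht.1 with
              | (a :: t'), _ => exact ⟨a, t', rfl⟩
            have hda : G.dist u a = j := by simpa using geo_head_dist ht.1
            have hra : G.Reachable u a := (geo_prop ht.1).2.2.2.1 a (by simp)
            calc ((nbrUp G u a).image (fun w => w :: a :: t')).card
                ≤ (nbrUp G u a).card := Finset.card_image_le
              _ = 2 := nbrUp_card hdeg hcyc (by omega) (by omega) hra hda
        _ = 2 * ((geo G u j).filter (fun l => l.drop (j - m) = s)).card := by
            rw [Finset.sum_const]; ring
        _ ≤ 2 * 2 ^ (j - m) := by
            have := ih hmj' (by omega)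
            omega
        _ = 2 ^ (j + 1 - m) := by
            have : j + 1 - m = (j - m) + 1 := by omega
            rw [this, pow_succ]
            ring

/-- build a walk from `u` to the head of a geo list. -/
lemma geo_walk {u : V} {k : ℕ} {l : List V} (hl : l ∈ geo G u k) :
    ∃ W : G.Walk u (l.getD 0 u), W.length = k ∧ W.support = l.reverse := by
  induction k generalizing l with
  | zero =>
    rw [geo, Finset.mem_singleton] at hl
    subst hl
    exact ⟨SimpleGraph.Walk.nil, rfl, rfl⟩
  | succ k ih =>
    rw [mem_geo_succ] at hl
    obtain ⟨t, ht, a, t', rfl, w, hw, rfl⟩ := hl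
    obtain ⟨W, hWl, hWs⟩ := ih ht
    simp only [nbrUp, Finset.mem_filter, SimpleGraph.mem_neighborFinset] at hw
    have hadj : G.Adj ((a :: t').getD 0 u) w := by simpa using hw.1
    rw [show (w :: a :: t').getD 0 u = w from rfl]
    refine ⟨(W.concat hadj), ?_, ?_⟩
    · rw [SimpleGraph.Walk.length_concat, hWl]
    · rw [SimpleGraph.Walk.support_concat, hWs]
      simp


variable {V : Type} [Fintype V] [DecidableEq V] {G : SimpleGraph V} [DecidableRel G.Adj]

lemma sdist_le_of_walk {u v : V} {S : Set V} (W : G.Walk u v)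
    (hW : ∀ x ∈ W.support, x ∈ S → x = v) : sdist G S u v ≤ (W.length : ℕ∞) :=
  iInf_le (fun p : {p : G.Walk u v // ∀ x ∈ p.support, x ∈ S → x = v} =>
    ((p : G.Walk u v).length : ℕ∞)) ⟨W, hW⟩

lemma expWeight_term_ge {u v : V} {S : Finset V} (hv : v ∈ S) {m : ℕ}
    (h : sdist G (↑S) u v ≤ (m : ℕ∞)) :
    2 * (1/2 : ℝ) ^ m ≤ if sdist G (↑S) u v = ⊤ then 0 else 2 * (1 / 2 : ℝ) ^ (sdist G (↑S) u v).toNat := by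
  have hne : sdist G (↑S) u v ≠ ⊤ := ne_top_of_le_ne_top (ENat.coe_ne_top m) h
  rw [if_neg hne]
  have htn : (sdist G (↑S) u v).toNat ≤ m := by
    have := ENat.toNat_le_toNat h (ENat.coe_ne_top m)
    simpa using this
  have : (1/2 : ℝ) ^ m ≤ (1/2 : ℝ) ^ (sdist G (↑S) u v).toNat :=
    pow_le_pow_of_le_one (by norm_num) (by norm_num) htn
  nlinarith

lemma pow_half_aux {d m : ℕ} (hm : m ≤ d) :
    (1/2:ℝ)^(d-1) * (2:ℝ)^(d-m) = 2^(d-m) / 2^(d-1) := by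
  rw [div_pow, one_pow]
  ring

lemma expWeight_ge_one (hdeg : ∀ x, G.degree x = 3) {d : ℕ}
    (hcyc : ∀ (a : V) (c : G.Walk a a), c.IsCycle → 2 * d + 1 ≤ c.length)
    {u : V} {T : Finset V} (hu : u ∉ T) (hd : 1 ≤ d)
    (hcov : 2^(d-1) ≤ ((geo G u d).filter
      (fun l => ((Finset.Icc 1 d).filter (fun i => l.getD (d-i) u ∈ T)).Nonempty)).card) :
    1 ≤ expWeight G T u := by
  classical
  set hits : List V → Finset ℕ := fun l => (Finset.Icc 1 d).filter (fun i => l.getD (d-i) u ∈ T)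
    with hhits
  set C : Finset (List V) := (geo G u d).filter (fun l => (hits l).Nonempty) with hC
  set mfun : List V → ℕ := fun l => if h : (hits l).Nonempty then (hits l).min' h else 0
    with hmfun
  set φ : List V → List V := fun l => l.drop (d - mfun l) with hφ
  -- basic facts about mfun on C
  have hmem_C : ∀ l ∈ C, l ∈ geo G u d ∧ (hits l).Nonempty := by
    intro l hl
    rw [hC, Finset.mem_filter] at hl
    exact hl
  have hm_spec : ∀ l ∈ C, mfun l ∈ hits l := by
    intro l hl
    simp only [hmfun]
    rw [dif_pos (hmem_C l hl).2]
    exact Finset.min'_mem _ _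
  have hm_min : ∀ l ∈ C, ∀ i ∈ hits l, mfun l ≤ i := by
    intro l hl i hi
    simp only [hmfun]
    rw [dif_pos (hmem_C l hl).2]
    exact Finset.min'_le _ _ hi
  have hm_range : ∀ l ∈ C, 1 ≤ mfun l ∧ mfun l ≤ d := by
    intro l hl
    have := hm_spec l hl
    rw [hhits] at this
    simp only [Finset.mem_filter, Finset.mem_Icc] at this
    exact ⟨this.1.1, this.1.2⟩
  -- suffix properties
  have hφ_geo : ∀ l ∈ C, φ l ∈ geo G u (mfun l) :=
    fun l hl => geo_suffix (hm_range l hl).2 (hmem_C l hl).1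
  have hφ_len : ∀ l ∈ C, (φ l).length = mfun l + 1 := by
    intro l hl
    have := (geo_prop (hφ_geo l hl)).1
    exact this
  set B : Finset (List V) := C.image φ with hB
  -- each s ∈ B determines m via length
  have hB_facts : ∀ s ∈ B, s ∈ geo G u (s.length - 1) ∧ 1 ≤ s.length - 1 ∧ s.length - 1 ≤ d := by
    intro s hs
    rw [hB, Finset.mem_image] at hs
    obtain ⟨l, hl, rfl⟩ := hs
    rw [hφ_len l hl]
    simp only [Nat.add_sub_cancel]
    exact ⟨hφ_geo l hl, (hm_range l hl).1, (hm_range l hl).2⟩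
  -- fibers of φ are small
  have hfiber : ∀ s ∈ B, (C.filter (fun l => φ l = s)).card ≤ 2 ^ (d - (s.length - 1)) := by
    intro s hs
    obtain ⟨hsgeo, hs1, hsd⟩ := hB_facts s hs
    have hsub : C.filter (fun l => φ l = s) ⊆
        (geo G u d).filter (fun l => l.drop (d - (s.length - 1)) = s) := by
      intro l hl
      rw [Finset.mem_filter] at hl ⊢
      obtain ⟨hlC, hlφ⟩ := hl
      refine ⟨(hmem_C l hlC).1, ?_⟩
      have hml : mfun l = s.length - 1 := by
        have := hφ_len l hlC
        rw [hlφ] at this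
        omega
      rw [← hml, ← hlφ]
    calc (C.filter (fun l => φ l = s)).card ≤ _ := Finset.card_le_card hsub
      _ ≤ 2 ^ (d - (s.length - 1)) := geo_fiber hdeg hcyc hs1 s d hsd le_rfl
  -- C.card bounded by sum over B
  have hcardsum : C.card ≤ ∑ s ∈ B, 2 ^ (d - (s.length - 1)) := by
    rw [Finset.card_eq_sum_card_fiberwise (f := φ) (t := B)
      (fun l hl => Finset.mem_image_of_mem φ hl)]
    exact Finset.sum_le_sum hfiber
  -- head map is injective on B, heads are in T, and sdist is small
  have hhead_dist : ∀ s ∈ B, G.dist u (s.getD 0 u) = s.length - 1 :=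
    fun s hs => geo_head_dist (hB_facts s hs).1
  have hhead_inj : ∀ s1 ∈ B, ∀ s2 ∈ B, s1.getD 0 u = s2.getD 0 u → s1 = s2 := by
    intro s1 hs1 s2 hs2 heq
    have h1 := hhead_dist s1 hs1
    have h2 := hhead_dist s2 hs2
    have hlen : s1.length - 1 = s2.length - 1 := by
      rw [← h1, ← h2, heq]
    exact geo_unique hcyc (hB_facts s1 hs1).2.2 (hB_facts s1 hs1).1
      (hlen ▸ (hB_facts s2 hs2).1) heq
  have hhead_T : ∀ s ∈ B, s.getD 0 u ∈ T := by
    intro s hs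
    rw [hB, Finset.mem_image] at hs
    obtain ⟨l, hl, rfl⟩ := hs
    have hspec := hm_spec l hl
    rw [hhits] at hspec
    simp only [Finset.mem_filter, Finset.mem_Icc] at hspec
    have : (φ l).getD 0 u = l.getD (d - mfun l) u := by
      rw [hφ]
      simp only []
      rw [List.getD_eq_getElem?_getD, List.getElem?_drop, List.getD_eq_getElem?_getD,
        Nat.add_zero]
    rw [this]
    exact hspec.2
  have hsdist : ∀ s ∈ B, sdist G (↑T) u (s.getD 0 u) ≤ ((s.length - 1 : ℕ) : ℕ∞) := by
    intro s hs
    rw [hB, Finset.mem_image] at hs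
    obtain ⟨l, hl, rfl⟩ := hs
    obtain ⟨W, hWlen, hWsupp⟩ := geo_walk (hφ_geo l hl)
    have hm1 := (hm_range l hl).1
    have hmd := (hm_range l hl).2
    have hlen := hφ_len l hl
    have hcond : ∀ x ∈ W.support, x ∈ (↑T : Set V) → x = (φ l).getD 0 u := by
      intro x hx hxT
      rw [hWsupp, List.mem_reverse] at hx
      obtain ⟨i, hilen, hix⟩ := List.mem_iff_getElem.mp hx
      have hige : (φ l).getD i u = x := by
        rw [List.getD_eq_getElem?_getD, List.getElem?_eq_getElem hilen]
        simpa using hix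
      by_cases hi0 : i = 0
      · rw [← hige, hi0]
      · exfalso
        -- x is at index i ≥ 1 in the suffix; it has distance mfun l - i from u
        have hidist : G.dist u x = mfun l - i := by
          have := (geo_prop (hφ_geo l hl)).2.2.1 i (by omega)
          rw [hige] at this
          exact this
        have hreach : G.Reachable u x := (geo_prop (hφ_geo l hl)).2.2.2.1 x
          (by rw [← hige]; rw [List.getD_eq_getElem?_getD, List.getElem?_eq_getElem hilen]
              simp only [Option.getD_some]
              exact List.getElem_mem _)
        by_cases him : i = mfun l
        · -- then x = u, but u ∉ T
          have : G.dist u x = 0 := by omega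
          have hxu : x = u := ((hreach.dist_eq_zero_iff).mp this).symm
          rw [hxu] at hxT
          exact hu hxT
        · -- then mfun l - i ∈ [1, mfun l), contradicting minimality
          have hj : 1 ≤ mfun l - i ∧ mfun l - i < mfun l := by omega
          have hxl : (φ l).getD i u = l.getD (d - mfun l + i) u := by
            rw [hφ]
            simp only []
            rw [List.getD_eq_getElem?_getD, List.getElem?_drop, List.getD_eq_getElem?_getD]
          have hhit : (mfun l - i) ∈ hits l := by
            rw [hhits]
            simp only [Finset.mem_filter, Finset.mem_Icc]
            refine ⟨⟨hj.1, by omega⟩, ?_⟩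
            have : d - (mfun l - i) = d - mfun l + i := by omega
            rw [this, ← hxl, hige]
            exact hxT
          have := hm_min l hl _ hhit
          omega
    have := sdist_le_of_walk W hcond
    rw [hWlen] at this
    have hfin : ((φ l).length - 1) = mfun l := by omega
    rw [hfin]
    exact this
  -- now assemble
  set A : Finset V := B.image (fun s => s.getD 0 u) with hA
  have hAT : A ⊆ T := by
    intro v hv
    rw [hA, Finset.mem_image] at hv
    obtain ⟨s, hs, rfl⟩ := hv
    exact hhead_T s hs
  have hterm_nonneg : ∀ v ∈ T, (0:ℝ) ≤
      (if sdist G (↑T) u v = ⊤ then 0 else 2 * (1 / 2 : ℝ) ^ (sdist G (↑T) u v).toNat) := by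
    intro v _
    split
    · exact le_refl 0
    · positivity
  have hpoint : ∀ s ∈ B, (1/2:ℝ)^(d-1) * (2:ℝ)^(d - (s.length - 1)) ≤
      (if sdist G (↑T) u (s.getD 0 u) = ⊤ then 0
        else 2 * (1 / 2 : ℝ) ^ (sdist G (↑T) u (s.getD 0 u)).toNat) := by
    intro s hs
    have h := expWeight_term_ge (hhead_T s hs) (hsdist s hs)
    refine le_trans (le_of_eq ?_) h
    have h1 := (hB_facts s hs).2.1
    have h2 := (hB_facts s hs).2.2
    generalize s.length - 1 = a at h1 h2 ⊢
    obtain ⟨b, rfl⟩ : ∃ b, a = b + 1 := ⟨a - 1, by omega⟩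
    have e1 : d - 1 = (d - (b + 1)) + b := by omega
    rw [e1, pow_add, pow_succ, mul_right_comm, ← mul_pow]
    norm_num
    ring
  have hsum_ge : (2:ℝ)^(d-1) ≤ ∑ s ∈ B, (2:ℝ)^(d - (s.length - 1)) := by
    have hle : (2^(d-1) : ℕ) ≤ ∑ s ∈ B, 2^(d - (s.length-1)) := le_trans hcov hcardsum
    exact_mod_cast hle
  calc (1:ℝ) = (1/2)^(d-1) * 2^(d-1) := by
        rw [one_div, inv_pow, inv_mul_cancel₀ (by positivity)]
    _ ≤ (1/2)^(d-1) * (∑ s ∈ B, (2:ℝ)^(d - (s.length - 1))) := by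
        apply mul_le_mul_of_nonneg_left hsum_ge (by positivity)
    _ = ∑ s ∈ B, (1/2:ℝ)^(d-1) * 2^(d - (s.length - 1)) := Finset.mul_sum _ _ _
    _ ≤ ∑ s ∈ B, (if sdist G (↑T) u (s.getD 0 u) = ⊤ then 0
          else 2 * (1 / 2 : ℝ) ^ (sdist G (↑T) u (s.getD 0 u)).toNat) :=
        Finset.sum_le_sum hpoint
    _ = ∑ v ∈ A, (if sdist G (↑T) u v = ⊤ then 0
          else 2 * (1 / 2 : ℝ) ^ (sdist G (↑T) u v).toNat) :=
        by
          rw [hA]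
          exact (Finset.sum_image (f := fun v => (if sdist G (↑T) u v = ⊤ then 0
            else 2 * (1 / 2 : ℝ) ^ (sdist G (↑T) u v).toNat)) hhead_inj).symm
    _ ≤ expWeight G T u :=
        Finset.sum_le_sum_of_subset_of_nonneg hAT (fun v hv _ => hterm_nonneg v hv)


variable {V : Type} [Fintype V] [DecidableEq V]

/-- binomial weight identity on any finite set -/
lemma wgt_sum_powerset (p : ℝ) (B : Finset V) :
    ∑ S ∈ B.powerset, p ^ S.card * (1 - p) ^ (B.card - S.card) = 1 := by
  have h := Finset.prod_add (fun _ : V => p) (fun _ : V => 1 - p) B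
  simp only [Finset.prod_const] at h
  have h1 : (p + (1 - p)) ^ B.card = 1 := by norm_num
  rw [h1] at h
  refine Eq.trans (Finset.sum_congr rfl ?_) h.symm
  intro S hS
  rw [Finset.mem_powerset] at hS
  rw [Finset.card_sdiff_of_subset hS]

lemma wgt_total (p : ℝ) :
    ∑ S ∈ (Finset.univ : Finset V).powerset,
      p ^ S.card * (1 - p) ^ (Fintype.card V - S.card) = 1 := by
  have := wgt_sum_powerset (V := V) p Finset.univ
  rwa [Finset.card_univ] at this

lemma wgt_avoid (p : ℝ) (A : Finset V) :
    ∑ S ∈ ((Finset.univ : Finset V).powerset).filter (fun S => S ∩ A = ∅),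
      p ^ S.card * (1 - p) ^ (Fintype.card V - S.card) = (1 - p) ^ A.card := by
  have hfilter : ((Finset.univ : Finset V).powerset).filter (fun S => S ∩ A = ∅)
      = Aᶜ.powerset := by
    ext S
    simp only [Finset.mem_filter, Finset.mem_powerset, Finset.subset_univ, true_and]
    constructor
    · intro h x hx
      rw [Finset.mem_compl]
      intro hxA
      have : x ∈ S ∩ A := Finset.mem_inter.mpr ⟨hx, hxA⟩
      rw [h] at this
      exact absurd this (Finset.notMem_empty x)
    · intro h
      ext x
      simp only [Finset.mem_inter, Finset.notMem_empty, iff_false, not_and]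
      intro hx hxA
      exact absurd hxA (Finset.mem_compl.mp (h hx))
  rw [hfilter]
  have hcard : ∀ S ∈ Aᶜ.powerset, p ^ S.card * (1 - p) ^ (Fintype.card V - S.card)
      = (1 - p) ^ A.card * (p ^ S.card * (1 - p) ^ (Aᶜ.card - S.card)) := by
    intro S hS
    rw [Finset.mem_powerset] at hS
    have h1 : S.card ≤ Aᶜ.card := Finset.card_le_card hS
    have h2 : Aᶜ.card = Fintype.card V - A.card := Finset.card_compl A
    have h3 : A.card ≤ Fintype.card V := Finset.card_le_univ A
    have : Fintype.card V - S.card = A.card + (Aᶜ.card - S.card) := by omega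
    rw [this, pow_add]
    ring
  rw [Finset.sum_congr rfl hcard, ← Finset.mul_sum, wgt_sum_powerset]
  ring

lemma wgt_mem (p : ℝ) (v : V) :
    ∑ S ∈ ((Finset.univ : Finset V).powerset).filter (fun S => v ∈ S),
      p ^ S.card * (1 - p) ^ (Fintype.card V - S.card) = p := by
  have hsplit := Finset.sum_filter_add_sum_filter_not
    ((Finset.univ : Finset V).powerset) (fun S => v ∈ S)
    (fun S => p ^ S.card * (1 - p) ^ (Fintype.card V - S.card))
  rw [wgt_total] at hsplit
  have hnot : ((Finset.univ : Finset V).powerset).filter (fun S => ¬ v ∈ S)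
      = ((Finset.univ : Finset V).powerset).filter (fun S => S ∩ {v} = ∅) := by
    apply Finset.filter_congr
    intro S _
    constructor
    · intro h
      ext x
      simp only [Finset.mem_inter, Finset.mem_singleton, Finset.notMem_empty, iff_false, not_and]
      rintro hx rfl
      exact h hx
    · intro h hv
      have : v ∈ S ∩ {v} := Finset.mem_inter.mpr ⟨hv, Finset.mem_singleton_self v⟩
      rw [h] at this
      exact absurd this (Finset.notMem_empty v)
  rw [hnot] at hsplit
  rw [wgt_avoid p ({v} : Finset V)] at hsplit
  simp only [Finset.card_singleton, pow_one] at hsplit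
  linarith

lemma wgt_card_sum (p : ℝ) :
    ∑ S ∈ (Finset.univ : Finset V).powerset,
      (p ^ S.card * (1 - p) ^ (Fintype.card V - S.card)) * (S.card : ℝ)
      = p * Fintype.card V := by
  have hcard : ∀ S : Finset V, (S.card : ℝ) = ∑ v ∈ (Finset.univ : Finset V),
      (if v ∈ S then (1:ℝ) else 0) := by
    intro S
    rw [Finset.sum_ite_mem, Finset.univ_inter, Finset.sum_const, nsmul_eq_mul, mul_one]
  calc ∑ S ∈ (Finset.univ : Finset V).powerset,
        (p ^ S.card * (1 - p) ^ (Fintype.card V - S.card)) * (S.card : ℝ)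
      = ∑ S ∈ (Finset.univ : Finset V).powerset, ∑ v ∈ (Finset.univ : Finset V),
        (p ^ S.card * (1 - p) ^ (Fintype.card V - S.card)) * (if v ∈ S then (1:ℝ) else 0) := by
        apply Finset.sum_congr rfl
        intro S _
        rw [hcard S, Finset.mul_sum]
    _ = ∑ v ∈ (Finset.univ : Finset V), ∑ S ∈ (Finset.univ : Finset V).powerset,
        (p ^ S.card * (1 - p) ^ (Fintype.card V - S.card)) * (if v ∈ S then (1:ℝ) else 0) :=
        Finset.sum_comm
    _ = ∑ v ∈ (Finset.univ : Finset V), p := by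
        apply Finset.sum_congr rfl
        intro v _
        have hv := wgt_mem (V := V) p v
        rw [Finset.sum_filter] at hv
        refine Eq.trans ?_ hv
        apply Finset.sum_congr rfl
        intro S _
        split <;> ring
    _ = p * Fintype.card V := by
        rw [Finset.sum_const, Finset.card_univ, nsmul_eq_mul]
        ring

lemma markov_bound {ι : Type*} (P : Finset ι) (w f : ι → ℝ) (hw : ∀ i ∈ P, 0 ≤ w i)
    (hf : ∀ i ∈ P, 0 ≤ f i) (c : ℝ) (hc : 0 < c) :
    ∑ i ∈ P.filter (fun i => c ≤ f i), w i ≤ (∑ i ∈ P, w i * f i) / c := by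
  rw [le_div_iff₀ hc]
  calc (∑ i ∈ P.filter (fun i => c ≤ f i), w i) * c
      = ∑ i ∈ P.filter (fun i => c ≤ f i), w i * c := by rw [Finset.sum_mul]
    _ ≤ ∑ i ∈ P.filter (fun i => c ≤ f i), w i * f i := by
        apply Finset.sum_le_sum
        intro i hi
        rw [Finset.mem_filter] at hi
        exact mul_le_mul_of_nonneg_left hi.2 (hw i hi.1)
    _ ≤ ∑ i ∈ P, w i * f i := by
        apply Finset.sum_le_sum_of_subset_of_nonneg (Finset.filter_subset _ _)
        intro i hi _
        exact mul_nonneg (hw i hi) (hf i hi)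


variable {V : Type} [Fintype V] [DecidableEq V] {G : SimpleGraph V} [DecidableRel G.Adj]

/-- Taken-d prefix of a geodesic list is d distinct vertices, and covering equivalence. -/
lemma geo_take_facts {u : V} {d : ℕ} (hd : 1 ≤ d) {l : List V} (hl : l ∈ geo G u d) :
    (l.take d).toFinset.card = d ∧
    ∀ S : Finset V, (S ∩ (l.take d).toFinset = ∅ ↔
      ¬ ((Finset.Icc 1 d).filter (fun i => l.getD (d-i) u ∈ S)).Nonempty) := by
  obtain ⟨hlen, _, hdist, _, _⟩ := geo_prop hl
  have htlen : (l.take d).length = d := by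
    rw [List.length_take, hlen]
    omega
  have hgetD : ∀ i, i < d → (l.take d).getD i u = l.getD i u := by
    intro i hi
    rw [List.getD_eq_getElem?_getD, List.getD_eq_getElem?_getD, List.getElem?_take]
    simp [hi]
  have hnodup : (l.take d).Nodup := by
    rw [List.nodup_iff_injective_get]
    intro i j hij
    have hi2 := i.2
    have hj2 := j.2
    have hi : i.1 < d := by omega
    have hj : j.1 < d := by omega
    have e1 : (l.take d).get i = (l.take d).getD i.1 u := by
      rw [List.getD_eq_getElem?_getD, List.getElem?_eq_getElem i.2]
      simp
    have e2 : (l.take d).get j = (l.take d).getD j.1 u := by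
      rw [List.getD_eq_getElem?_getD, List.getElem?_eq_getElem j.2]
      simp
    rw [e1, e2, hgetD i.1 hi, hgetD j.1 hj] at hij
    have d1 := hdist i.1 (by omega)
    have d2 := hdist j.1 (by omega)
    rw [hij] at d1
    rw [d1] at d2
    ext
    omega
  constructor
  · rw [List.toFinset_card_of_nodup hnodup, htlen]
  · intro S
    constructor
    · intro hemp hne
      obtain ⟨i, hi⟩ := hne
      simp only [Finset.mem_filter, Finset.mem_Icc] at hi
      obtain ⟨⟨hi1, hi2⟩, hiS⟩ := hi
      have hmem : l.getD (d-i) u ∈ l.take d := by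
        have hdi : d - i < d := by omega
        rw [← hgetD (d-i) hdi]
        rw [List.getD_eq_getElem?_getD, List.getElem?_eq_getElem (by omega : d - i < (l.take d).length)]
        simp only [Option.getD_some]
        exact List.getElem_mem _
      have : l.getD (d-i) u ∈ S ∩ (l.take d).toFinset :=
        Finset.mem_inter.mpr ⟨hiS, List.mem_toFinset.mpr hmem⟩
      rw [hemp] at this
      exact absurd this (Finset.notMem_empty _)
    · intro hno
      ext x
      simp only [Finset.mem_inter, Finset.notMem_empty, iff_false, not_and]
      intro hxS hxT
      apply hno
      rw [List.mem_toFinset] at hxT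
      obtain ⟨j, hjlen', hjx⟩ := List.mem_iff_getElem.mp hxT
      have hjlen : j < d := by omega
      refine ⟨d - j, ?_⟩
      simp only [Finset.mem_filter, Finset.mem_Icc]
      have hxj : l.getD (d - (d - j)) u = x := by
        have : d - (d - j) = j := by omega
        rw [this, ← hgetD j hjlen]
        rw [List.getD_eq_getElem?_getD, List.getElem?_eq_getElem hjlen']
        simpa using hjx
      exact ⟨⟨by omega, by omega⟩, by rw [hxj]; exact hxS⟩

lemma exists_good_T (hdeg : ∀ x, G.degree x = 3) {d : ℕ}
    (hcyc : ∀ (a : V) (c : G.Walk a a), c.IsCycle → 2 * d + 1 ≤ c.length)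
    (hd : 1 ≤ d) {p ε : ℝ} (hp0 : 0 < p) (hp1 : p < 1)
    (hpar : p + (3/2) * (1-p)^d ≤ ε) :
    ∃ T : Finset V, IsExpDomSet G T ∧ (T.card : ℝ) ≤ ε * Fintype.card V := by
  classical
  set n := Fintype.card V with hn
  set w : Finset V → ℝ := fun S => p ^ S.card * (1 - p) ^ (n - S.card) with hw
  have hw_nonneg : ∀ S : Finset V, 0 ≤ w S := by
    intro S
    apply mul_nonneg (pow_nonneg (le_of_lt hp0) _) (pow_nonneg (by linarith) _)
  have hw_pos : ∀ S : Finset V, 0 < w S := by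
    intro S
    apply mul_pos (pow_pos hp0 _) (pow_pos (by linarith) _)
  set uncov : V → Finset V → ℕ := fun u S => ((geo G u d).filter
    (fun l => ¬ ((Finset.Icc 1 d).filter (fun i => l.getD (d-i) u ∈ S)).Nonempty)).card
    with huncov
  -- expectation of uncov
  have hexp : ∀ u : V, ∑ S ∈ (Finset.univ : Finset V).powerset, w S * (uncov u S : ℝ)
      = 3 * 2^(d-1) * (1-p)^d := by
    intro u
    have huncov_sum : ∀ S : Finset V, (uncov u S : ℝ) = ∑ l ∈ geo G u d,
        (if S ∩ (l.take d).toFinset = ∅ then (1:ℝ) else 0) := by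
      intro S
      simp only [huncov]
      rw [Finset.card_filter]
      push_cast
      apply Finset.sum_congr rfl
      intro l hl
      have hfact := (geo_take_facts hd hl).2 S
      by_cases hcase : S ∩ (l.take d).toFinset = ∅
      · rw [if_pos (hfact.mp hcase), if_pos hcase]
      · rw [if_neg, if_neg hcase]
        intro hfalse
        exact hcase (hfact.mpr hfalse)
    calc ∑ S ∈ (Finset.univ : Finset V).powerset, w S * (uncov u S : ℝ)
        = ∑ S ∈ (Finset.univ : Finset V).powerset, ∑ l ∈ geo G u d,
          w S * (if S ∩ (l.take d).toFinset = ∅ then (1:ℝ) else 0) := by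
          apply Finset.sum_congr rfl
          intro S _
          rw [huncov_sum S, Finset.mul_sum]
      _ = ∑ l ∈ geo G u d, ∑ S ∈ (Finset.univ : Finset V).powerset,
          w S * (if S ∩ (l.take d).toFinset = ∅ then (1:ℝ) else 0) := Finset.sum_comm
      _ = ∑ l ∈ geo G u d, (1-p)^d := by
          apply Finset.sum_congr rfl
          intro l hl
          have hA := wgt_avoid p ((l.take d).toFinset)
          rw [(geo_take_facts hd hl).1] at hA
          rw [Finset.sum_filter] at hA
          refine Eq.trans ?_ hA
          apply Finset.sum_congr rfl
          intro S _
          rw [hw]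
          split <;> ring
      _ = 3 * 2^(d-1) * (1-p)^d := by
          rw [Finset.sum_const, geo_card hdeg hcyc u hd le_rfl, nsmul_eq_mul]
          push_cast
          ring
  set Bad : Finset V → Finset V := fun S => Finset.univ.filter
    (fun u => (2^d : ℕ) ≤ uncov u S) with hBad
  -- expectation bound for |S| + |Bad S|
  have htotal : ∑ S ∈ (Finset.univ : Finset V).powerset,
      w S * ((S.card : ℝ) + ((Bad S).card : ℝ)) ≤ ε * n := by
    have h1 : ∑ S ∈ (Finset.univ : Finset V).powerset, w S * (S.card : ℝ) = p * n :=
      wgt_card_sum p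
    have h2 : ∑ S ∈ (Finset.univ : Finset V).powerset, w S * ((Bad S).card : ℝ)
        ≤ (3/2) * (1-p)^d * n := by
      have hBc : ∀ S : Finset V, ((Bad S).card : ℝ) = ∑ u ∈ (Finset.univ : Finset V),
          (if (2^d : ℕ) ≤ uncov u S then (1:ℝ) else 0) := by
        intro S
        rw [hBad, Finset.card_filter]
        push_cast
        rfl
      calc ∑ S ∈ (Finset.univ : Finset V).powerset, w S * ((Bad S).card : ℝ)
          = ∑ u ∈ (Finset.univ : Finset V), ∑ S ∈ (Finset.univ : Finset V).powerset,
            w S * (if (2^d : ℕ) ≤ uncov u S then (1:ℝ) else 0) := by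
            rw [← Finset.sum_comm]
            apply Finset.sum_congr rfl
            intro S _
            rw [hBc S, Finset.mul_sum]
        _ ≤ ∑ u ∈ (Finset.univ : Finset V), (3/2) * (1-p)^d := by
            apply Finset.sum_le_sum
            intro u _
            have hmk := markov_bound ((Finset.univ : Finset V).powerset) w
              (fun S => (uncov u S : ℝ)) (fun S _ => hw_nonneg S)
              (fun S _ => Nat.cast_nonneg _) ((2:ℝ)^d) (by positivity)
            rw [hexp u] at hmk
            have hstep : ∑ S ∈ (Finset.univ : Finset V).powerset,
                w S * (if (2^d : ℕ) ≤ uncov u S then (1:ℝ) else 0)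
                = ∑ S ∈ ((Finset.univ : Finset V).powerset).filter
                  (fun S => (2:ℝ)^d ≤ (uncov u S : ℝ)), w S := by
              rw [Finset.sum_filter]
              apply Finset.sum_congr rfl
              intro S _
              have : ((2^d : ℕ) ≤ uncov u S) ↔ ((2:ℝ)^d ≤ (uncov u S : ℝ)) := by
                constructor
                · intro h; exact_mod_cast h
                · intro h; exact_mod_cast h
              split
              · rw [if_pos (by push_cast [← this]; assumption)]
                ring
              · rw [if_neg (by rw [← this]; assumption)]
                ring
            rw [hstep]
            refine le_trans hmk ?_
            rw [div_le_iff₀ (by positivity)]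
            have h2d : (2:ℝ)^d = 2 * 2^(d-1) := by
              rw [← pow_succ']
              congr 1
              omega
            rw [h2d]
            ring_nf
            nlinarith [pow_nonneg (by linarith : (0:ℝ) ≤ 1 - p) d,
              pow_pos (by norm_num : (0:ℝ) < 2) (d-1)]
        _ = (3/2) * (1-p)^d * n := by
            rw [Finset.sum_const, Finset.card_univ, nsmul_eq_mul]
            ring
    calc ∑ S ∈ (Finset.univ : Finset V).powerset, w S * ((S.card : ℝ) + ((Bad S).card : ℝ))
        = (∑ S ∈ (Finset.univ : Finset V).powerset, w S * (S.card : ℝ))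
          + ∑ S ∈ (Finset.univ : Finset V).powerset, w S * ((Bad S).card : ℝ) := by
          rw [← Finset.sum_add_distrib]
          apply Finset.sum_congr rfl
          intro S _
          ring
      _ ≤ p * n + (3/2) * (1-p)^d * n := by linarith
      _ ≤ ε * n := by
          have hn0 : (0:ℝ) ≤ n := Nat.cast_nonneg _
          nlinarith
  -- extract a good S₀
  have hexists : ∃ S₀ : Finset V, (S₀.card : ℝ) + ((Bad S₀).card : ℝ) ≤ ε * n := by
    by_contra hcon
    push_neg at hcon
    have hne : ((Finset.univ : Finset V).powerset).Nonempty := ⟨∅, by simp⟩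
    have hlt : ∑ S ∈ (Finset.univ : Finset V).powerset, w S * (ε * n)
        < ∑ S ∈ (Finset.univ : Finset V).powerset,
          w S * ((S.card : ℝ) + ((Bad S).card : ℝ)) := by
      apply Finset.sum_lt_sum_of_nonempty hne
      intro S _
      exact mul_lt_mul_of_pos_left (hcon S) (hw_pos S)
    rw [← Finset.sum_mul, wgt_total p, one_mul] at hlt
    linarith
  obtain ⟨S₀, hS₀⟩ := hexists
  refine ⟨S₀ ∪ Bad S₀, ?_, ?_⟩
  · -- exponential dominating set
    intro u hu
    have huB : u ∉ Bad S₀ := fun h => hu (Finset.mem_union_right _ h)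
    have huncov_lt : uncov u S₀ < 2^d := by
      by_contra hge
      push_neg at hge
      apply huB
      rw [hBad, Finset.mem_filter]
      exact ⟨Finset.mem_univ u, hge⟩
    -- covered count for S₀
    have htot := Finset.card_filter_add_card_filter_not (s := geo G u d)
      (p := fun l => ((Finset.Icc 1 d).filter (fun i => l.getD (d-i) u ∈ S₀)).Nonempty)
    rw [geo_card hdeg hcyc u hd le_rfl] at htot
    have h2d : 2^d = 2 * 2^(d-1) := by
      rw [← pow_succ']
      congr 1
      omega
    have hcovS₀ : 2^(d-1) ≤ ((geo G u d).filter
        (fun l => ((Finset.Icc 1 d).filter (fun i => l.getD (d-i) u ∈ S₀)).Nonempty)).card := by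
      have huc := huncov_lt
      simp only [huncov] at huc
      rw [h2d] at huc
      omega
    have hmono : ((geo G u d).filter
        (fun l => ((Finset.Icc 1 d).filter (fun i => l.getD (d-i) u ∈ S₀)).Nonempty)) ⊆
        ((geo G u d).filter
        (fun l => ((Finset.Icc 1 d).filter (fun i => l.getD (d-i) u ∈ S₀ ∪ Bad S₀)).Nonempty)) := by
      intro l hl
      rw [Finset.mem_filter] at hl ⊢
      refine ⟨hl.1, ?_⟩
      obtain ⟨i, hi⟩ := hl.2
      rw [Finset.mem_filter] at hi
      exact ⟨i, Finset.mem_filter.mpr ⟨hi.1, Finset.mem_union_left _ hi.2⟩⟩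
    apply expWeight_ge_one hdeg hcyc hu hd
    exact le_trans hcovS₀ (Finset.card_le_card hmono)
  · -- cardinality
    have := Finset.card_union_le S₀ (Bad S₀)
    have hcast : ((S₀ ∪ Bad S₀).card : ℝ) ≤ (S₀.card : ℝ) + ((Bad S₀).card : ℝ) := by
      exact_mod_cast this
    linarith


theorem stmt14 (ε : ℝ) (hε0 : 0 < ε) (hε1 : ε < 1) :
    ∃ g : ℕ, g = 2 * ⌈3 / ε * Real.log (3 / ε)⌉₊ + 1 ∧
      ∀ (V : Type) [Fintype V] (G : SimpleGraph V) [DecidableRel G.Adj],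
        (∀ v, G.degree v = 3) → (g : ℕ∞) ≤ G.girth →
          (expDomNum V G : ℝ) ≤ ε * Fintype.card V := by

  set d := ⌈3 / ε * Real.log (3 / ε)⌉₊ with hd_def
  refine ⟨2 * d + 1, rfl, ?_⟩
  intro V _ G _ hdeg hgirth
  letI : DecidableEq V := Classical.decEq V
  have hcyc : ∀ (a : V) (c : G.Walk a a), c.IsCycle → 2 * d + 1 ≤ c.length :=
    fun a c hc => cycle_long hgirth c hc
  set x : ℝ := 3 / ε with hxdef
  have hx3 : (3:ℝ) ≤ x := by
    rw [hxdef, le_div_iff₀ hε0]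
    nlinarith
  have hx1 : (1:ℝ) < x := by linarith
  have hlogpos : 0 < Real.log x := Real.log_pos hx1
  have hd1 : 1 ≤ d := by
    have : 0 < d := by
      rw [hd_def]
      rw [Nat.ceil_pos]
      exact mul_pos (by linarith) hlogpos
    omega
  have hdge : x * Real.log x ≤ (d:ℝ) := Nat.le_ceil _
  -- key analytic bound
  have hkey : (1 - ε/2)^d ≤ ε/3 := by
    have h1 : (1 - ε/2)^d ≤ Real.exp (-(ε/2))^d := by
      apply pow_le_pow_left₀ (by linarith)
      have := Real.add_one_le_exp (-(ε/2))
      linarith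
    have h2 : Real.exp (-(ε/2))^d = Real.exp ((d:ℝ) * (-(ε/2))) :=
      (Real.exp_nat_mul _ d).symm
    have h3 : (d:ℝ) * (-(ε/2)) ≤ Real.log x * (-(3/2)) := by
      have hεx : (ε/2) * x = 3/2 := by
        rw [hxdef]
        field_simp
      nlinarith
    have h4 : Real.exp ((d:ℝ) * (-(ε/2))) ≤ Real.exp (Real.log x * (-(3/2))) :=
      Real.exp_le_exp.mpr h3
    have h5 : Real.exp (Real.log x * (-(3/2))) = x ^ ((-(3/2)) : ℝ) :=
      (Real.rpow_def_of_pos (by linarith) _).symm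
    have h6 : x ^ ((-(3/2)) : ℝ) ≤ x ^ ((-1) : ℝ) :=
      Real.rpow_le_rpow_of_exponent_le (le_of_lt hx1) (by norm_num)
    have h7 : x ^ ((-1) : ℝ) = ε/3 := by
      rw [Real.rpow_neg_one, hxdef]
      field_simp
    calc (1 - ε/2)^d ≤ Real.exp (-(ε/2))^d := h1
      _ = Real.exp ((d:ℝ) * (-(ε/2))) := h2
      _ ≤ Real.exp (Real.log x * (-(3/2))) := h4
      _ = x ^ ((-(3/2)) : ℝ) := h5
      _ ≤ x ^ ((-1) : ℝ) := h6
      _ = ε/3 := h7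
  have hpar : ε/2 + (3/2) * (1 - ε/2)^d ≤ ε := by nlinarith
  obtain ⟨T, hT, hTcard⟩ := exists_good_T hdeg hcyc hd1
    (by linarith : (0:ℝ) < ε/2) (by linarith : ε/2 < 1) hpar
  have hle : expDomNum V G ≤ T.card := Nat.sInf_le ⟨T, hT, rfl⟩
  calc (expDomNum V G : ℝ) ≤ (T.card : ℝ) := by exact_mod_cast hle
    _ ≤ ε * Fintype.card V := hTcard
end

section
/- Let T be a tree rooted at r, let S be a subset of the endvertices of T with r ∉ S, and for every vertex u define ∂w(u) = max{ 2^{dist_T(u,v)}(1 − w_{(T_u, S ∩ V(T_u))}(v)) : v ∈ V(T_u) }, where T_u is the subtree rooted at u. If ∂w(u) ≤ 1 for every vertex u of T, then S ∪ {r} is an exponential dominating set of T. -/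
open Finset

section helpers
variable {V : Type*} {G : SimpleGraph V}

lemma my_dist_split [DecidableEq V] (hconn : G.Connected) {u v x : V} (p : G.Walk u v)
    (hp : p.length = G.dist u v) (hx : x ∈ p.support) :
    G.dist u x + G.dist x v = G.dist u v := by
  have h1 := G.dist_le (p.takeUntil x hx)
  have h2 := G.dist_le (p.dropUntil x hx)
  have h3 : (p.takeUntil x hx).length + (p.dropUntil x hx).length = p.length := by
    rw [← SimpleGraph.Walk.length_append, p.take_spec hx]
  have h4 := hconn.dist_triangle (u := u) (v := x) (w := v)
  omega

lemma my_leaf_not_between (hconn : G.Connected) {x u v : V}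
    (hdeg : ∀ a b, G.Adj x a → G.Adj x b → a = b)
    (hxu : x ≠ u) (hxv : x ≠ v) : G.dist u x + G.dist x v ≠ G.dist u v := by
  obtain ⟨p, hp⟩ := hconn.exists_walk_length_eq_dist x u
  obtain ⟨q, hq⟩ := hconn.exists_walk_length_eq_dist x v
  obtain ⟨a, ha, p', rfl⟩ := p.exists_eq_cons_of_ne hxu
  obtain ⟨b, hb, q', rfl⟩ := q.exists_eq_cons_of_ne hxv
  obtain rfl : a = b := hdeg a b ha hb
  have h1 : G.dist a u ≤ p'.length := G.dist_le p'
  have h2 : G.dist a v ≤ q'.length := G.dist_le q'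
  have h4 := hconn.dist_triangle (u := u) (v := a) (w := v)
  have h5 : G.dist u a = G.dist a u := G.dist_comm
  have h6 : G.dist u x = G.dist x u := G.dist_comm
  simp only [SimpleGraph.Walk.length_cons] at hp hq
  omega

lemma sdist_le {S : Set V} {u v : V} (p : G.Walk u v)
    (hp : ∀ x ∈ p.support, x ∈ S → x = v) : sdist G S u v ≤ p.length :=
  iInf_le (f := fun p : {p : G.Walk u v // ∀ x ∈ p.support, x ∈ S → x = v} =>
    ((p : G.Walk u v).length : ℕ∞)) ⟨p, hp⟩

lemma le_sdist {S : Set V} {u v : V} {n : ℕ∞}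
    (h : ∀ p : G.Walk u v, (∀ x ∈ p.support, x ∈ S → x = v) → n ≤ p.length) :
    n ≤ sdist G S u v :=
  le_iInf fun p => h p p.2

lemma term_ge_aux {x : ℕ∞} {n : ℕ} (h : x ≤ n) :
    2 * (1 / 2 : ℝ) ^ n ≤ (if x = ⊤ then (0:ℝ) else 2 * (1 / 2 : ℝ) ^ x.toNat) := by
  lift x to ℕ using (h.trans_lt (by simp [lt_top_iff_ne_top])).ne
  rw [if_neg (by simp)]
  simp only [ENat.toNat_coe]
  have h' : x ≤ n := by exact_mod_cast h
  have := pow_le_pow_of_le_one (by norm_num : (0:ℝ) ≤ 1/2) (by norm_num) h'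
  nlinarith

lemma term_le_aux {x : ℕ∞} {n : ℕ} (h : (n : ℕ∞) ≤ x) :
    (if x = ⊤ then (0:ℝ) else 2 * (1 / 2 : ℝ) ^ x.toNat) ≤ 2 * (1 / 2 : ℝ) ^ n := by
  by_cases hx : x = ⊤
  · rw [if_pos hx]; positivity
  · lift x to ℕ using hx
    rw [if_neg (by simp)]
    simp only [ENat.toNat_coe]
    have h' : n ≤ x := by exact_mod_cast h
    have := pow_le_pow_of_le_one (by norm_num : (0:ℝ) ≤ 1/2) (by norm_num) h'
    nlinarith

lemma term_nonneg {x : ℕ∞} :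
    (0:ℝ) ≤ (if x = ⊤ then (0:ℝ) else 2 * (1 / 2 : ℝ) ^ x.toNat) := by
  split <;> positivity

end helpers

theorem stmt15 {V : Type*} [Fintype V] [DecidableEq V] (T : SimpleGraph V) [DecidableRel T.Adj]
    (hconn : T.Connected) (hacyc : T.IsAcyclic) (r : V)
    (S : Finset V) (hrS : r ∉ S) (hSleaf : ∀ v ∈ S, T.degree v ≤ 1)
    -- `D u` is the vertex set of the subtree `T_u` rooted at `u` (its descendants incl. `u`):
    (D : V → Finset V)
    (hD : ∀ u v, v ∈ D u ↔ T.dist r u + T.dist u v = T.dist r v)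
    -- `∂w(u) ≤ 1` for every vertex `u`:
    (hpw : ∀ u : V, ∀ v : V, ∀ hv : v ∈ D u,
      (2 : ℝ) ^ (T.dist u v) *
        (1 - expWeight (T.comap (Subtype.val : {x : V // x ∈ D u} → V))
          (S.subtype (fun x => x ∈ D u)) ⟨v, hv⟩) ≤ 1) :
    IsExpDomSet T (insert r S) := by
  intro u hu
  simp only [Finset.mem_insert, not_or] at hu
  obtain ⟨hur, huS⟩ := hu
  -- leaves are never strictly between two other vertices
  have hSbet : ∀ x ∈ S, ∀ a b : V, x ≠ a → x ≠ b →
      T.dist a x + T.dist x b ≠ T.dist a b := by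
    intro x hx a b h1 h2
    refine my_leaf_not_between hconn (fun a' b' ha' hb' => ?_) h1 h2
    exact Finset.card_le_one.mp (hSleaf x hx) a' ((T.mem_neighborFinset x a').mpr ha')
      b' ((T.mem_neighborFinset x b').mpr hb')
  have hd1 : 1 ≤ T.dist r u := hconn.pos_dist_of_ne (fun h => hur h.symm)
  obtain ⟨p, hp⟩ := hconn.exists_walk_length_eq_dist r u
  obtain ⟨c, hrc, p', rfl⟩ := p.exists_eq_cons_of_ne (fun h => hur h.symm)
  simp only [SimpleGraph.Walk.length_cons] at hp
  have hdrc : T.dist r c = 1 := by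
    have h2 : T.dist r c ≤ 1 := by
      simpa using T.dist_le (SimpleGraph.Walk.cons hrc SimpleGraph.Walk.nil)
    have h3 := hconn.pos_dist_of_ne hrc.ne
    omega
  -- k = dist c u, so dist r u = k + 1
  set k := T.dist c u with hk
  have hdcu : T.dist r u = k + 1 := by
    have h1 : T.dist c u ≤ p'.length := T.dist_le p'
    have h3 := hconn.dist_triangle (u := r) (v := c) (w := u)
    omega
  have huDc : u ∈ D c := (hD c u).mpr (by omega)
  -- r is never on a geodesic from u to a vertex of D c
  have hA : ∀ v ∈ D c, T.dist u r + T.dist r v ≠ T.dist u v := by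
    intro v hv
    have h1 := (hD c v).mp hv
    have h2 := hconn.dist_triangle (u := u) (v := c) (w := v)
    have h3 : T.dist u c = k := T.dist_comm
    have h4 : T.dist u r = T.dist r u := T.dist_comm
    omega
  -- the r-term of expWeight
  have hsr : sdist T (↑(insert r S)) u r ≤ ((k+1 : ℕ) : ℕ∞) := by
    obtain ⟨q, hq⟩ := hconn.exists_walk_length_eq_dist u r
    have hprop : ∀ x ∈ q.support, x ∈ (↑(insert r S) : Set V) → x = r := by
      intro x hx hxS
      simp only [Finset.coe_insert, Set.mem_insert_iff, Finset.mem_coe] at hxS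
      rcases hxS with rfl | hxS
      · rfl
      · by_contra hxr
        exact hSbet x hxS u r (fun h => huS (h ▸ hxS)) hxr (my_dist_split hconn q hq hx)
    calc sdist T (↑(insert r S)) u r ≤ (q.length : ℕ∞) := sdist_le q hprop
      _ = _ := by rw [hq, T.dist_comm, hdcu]
  -- the terms for v ∈ S ∩ D c
  have hsv : ∀ v ∈ S, v ∈ D c →
      sdist T (↑(insert r S)) u v ≤ ((T.dist u v : ℕ) : ℕ∞) := by
    intro v hvS hvD
    obtain ⟨q, hq⟩ := hconn.exists_walk_length_eq_dist u v
    have hprop : ∀ x ∈ q.support, x ∈ (↑(insert r S) : Set V) → x = v := by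
      intro x hx hxS
      simp only [Finset.coe_insert, Set.mem_insert_iff, Finset.mem_coe] at hxS
      rcases hxS with rfl | hxS
      · exact absurd (my_dist_split hconn q hq hx) (hA v hvD)
      · by_contra hxv
        exact hSbet x hxS u v (fun h => huS (h ▸ hxS)) hxv (my_dist_split hconn q hq hx)
    calc sdist T (↑(insert r S)) u v ≤ (q.length : ℕ∞) := sdist_le q hprop
      _ = _ := by rw [hq]
  -- lower bound on subtree sdist
  have hT'dist : ∀ a b : {x : V // x ∈ D c},
      ((T.dist (a : V) (b : V) : ℕ) : ℕ∞) ≤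
        sdist (T.comap (Subtype.val : {x : V // x ∈ D c} → V))
          (↑(S.subtype (fun x => x ∈ D c))) a b := by
    intro a b
    apply le_sdist
    intro q _
    have hmap : T.dist (a : V) (b : V) ≤
        (q.map (⟨Subtype.val, fun h => h⟩ :
          (T.comap (Subtype.val : {x : V // x ∈ D c} → V)) →g T)).length :=
      T.dist_le _
    rw [SimpleGraph.Walk.length_map] at hmap
    exact_mod_cast hmap
  -- the subtree weight bound
  have hsub : expWeight (T.comap (Subtype.val : {x : V // x ∈ D c} → V))
      (S.subtype (fun x => x ∈ D c)) ⟨u, huDc⟩ ≤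
      ∑ v ∈ S.filter (fun x => x ∈ D c), 2 * (1 / 2 : ℝ) ^ (T.dist u v) := by
    rw [expWeight]
    rw [← Finset.subtype_map (p := fun x => x ∈ D c) (s := S), Finset.sum_map]
    exact Finset.sum_le_sum fun v _ => term_le_aux (hT'dist ⟨u, huDc⟩ v)
  -- combine
  have hW : 1 - (1/2:ℝ)^k ≤ expWeight (T.comap (Subtype.val : {x : V // x ∈ D c} → V))
      (S.subtype (fun x => x ∈ D c)) ⟨u, huDc⟩ := by
    have h := hpw c u huDc
    have h2pos : (0:ℝ) < 2 ^ k := by positivity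
    have h12 : (1/2:ℝ)^k = (2^k)⁻¹ := by rw [one_div, inv_pow]
    have hinv : (2:ℝ)^k * (2^k)⁻¹ = 1 := mul_inv_cancel₀ h2pos.ne'
    rw [← hk] at h
    rw [h12]
    nlinarith [h, hinv, h2pos]
  rw [expWeight, Finset.sum_insert hrS]
  have hterm_r : 2 * (1/2:ℝ)^(k+1) ≤
      (if sdist T (↑(insert r S)) u r = ⊤ then (0:ℝ)
        else 2 * (1 / 2 : ℝ) ^ (sdist T (↑(insert r S)) u r).toNat) :=
    term_ge_aux hsr
  have hsum : ∑ v ∈ S.filter (fun x => x ∈ D c), 2 * (1 / 2 : ℝ) ^ (T.dist u v) ≤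
      ∑ v ∈ S, (if sdist T (↑(insert r S)) u v = ⊤ then (0:ℝ)
        else 2 * (1 / 2 : ℝ) ^ (sdist T (↑(insert r S)) u v).toNat) := by
    refine le_trans (Finset.sum_le_sum ?_)
      (Finset.sum_le_sum_of_subset_of_nonneg (Finset.filter_subset _ _)
        (fun _ _ _ => term_nonneg))
    intro v hv
    simp only [Finset.mem_filter] at hv
    exact term_ge_aux (hsv v hv.1 hv.2)
  have hpow : 2 * (1/2:ℝ)^(k+1) = (1/2:ℝ)^k := by ring
  nlinarith [hterm_r, hsum, hsub, hW]
end
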